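/- arXiv:1805.11316 — 2 statements merged into one kernel-verified Lean document; each statement's English description precedes it below -/
import Mathlib

section
/- The fractal convolution map P : L^p(I) × L^p(I) → L^p(I), P(f,b) = f *_T b, is linear: for all f, f', b, b' ∈ L^p(I) and γ ∈ ℝ, (γf + f') *_T (γb + b') = γ(f *_T b) + (f' *_T b'). Moreover it is bounded: ‖f *_T b‖_p ≤ (1/(1−Λ))(‖f‖_p + ‖b‖_p) for all f, b ∈ L^p(I); in particular the operator norm of P with respect to the product norm ‖(f,b)‖ = ‖f‖_p + ‖b‖_p is at most 1/(1−Λ). -/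
open MeasureTheory ENNReal

noncomputable section

/-- The inverse of the increasing affine map `L n` sending `[x 0, x N]` onto
`[x n, x (n+1)]` (so `L n (x 0) = x n.castSucc` and `L n (x N) = x n.succ`). -/
def Linv {N : ℕ} (x : Fin (N + 1) → ℝ) (n : Fin N) (y : ℝ) : ℝ :=
  x 0 + (y - x n.castSucc) * (x (Fin.last N) - x 0) / (x n.succ - x n.castSucc)

/-- The subinterval `I n` of the partition: `[x 0, x 1]` for `n = 0` and
`(x n, x (n+1)]` otherwise. -/
def subInt {N : ℕ} (x : Fin (N + 1) → ℝ) (n : Fin N) : Set ℝ :=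
  if n.val = 0 then Set.Icc (x n.castSucc) (x n.succ)
  else Set.Ioc (x n.castSucc) (x n.succ)

/-- `h` is the image of `g` under the Read–Bajraktarević operator `T_{f,b}` with
scale functions `α`, almost everywhere: on each `I n`,
`h = f + (α n ∘ Lₙ⁻¹) · ((g - b) ∘ Lₙ⁻¹)`. -/
def RBEq {N : ℕ} (μ : Measure ℝ) (x : Fin (N + 1) → ℝ) (α : Fin N → ℝ → ℝ)
    (f b g h : ℝ → ℝ) : Prop :=
  ∀ n : Fin N, ∀ᵐ t ∂μ, t ∈ subInt x n →
    h t = f t + α n (Linv x n t) * (g (Linv x n t) - b (Linv x n t))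

/-- `h` satisfies the self-referential equation of `T_{f,b}`, i.e. `h` is a fixed
point of `T_{f,b}`; `h` is then the fractal convolution `f *_T b`. -/
def SelfRef {N : ℕ} (μ : Measure ℝ) (x : Fin (N + 1) → ℝ) (α : Fin N → ℝ → ℝ)
    (f b h : ℝ → ℝ) : Prop :=
  RBEq μ x α f b h h

/-!
On each piece `I n` the equation `h = T_{f,b} g` reads `h - f = (α n ∘ Lₙ⁻¹) · ((g - b) ∘ Lₙ⁻¹)`.
Since `Lₙ⁻¹` pushes Lebesgue measure on `I n` forward to `|I n| / |I|` times Lebesgue measure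
on `I`, and these ratios sum to `1`, this gives `‖h - f‖_p ≤ Λ ‖g - b‖_p` for every `p ≤ ∞`.
Applied to the difference of two fixed points, it shows that `f *_T b` is unique and depends only
on the classes of `f` and `b` in `L^p`; as fixed points are closed under linear combinations of the
data, `P` is linear. Applied to `g = h = f *_T b`, it gives `‖h‖ ≤ ‖f‖ + Λ (‖h‖ + ‖b‖)`.
-/

open Set Filter

section PiecewiseComposition

variable {X ι : Type*} [MeasurableSpace X] [Countable ι] {μ : Measure X}
  {A : ι → Set X} {φ : ι → X → X} {c : ι → ℝ≥0∞}

theorem lintegral_le_tsum_mul_of_ae_le_comp {F G : X → ℝ≥0∞} (hG : AEMeasurable G μ)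
    (hA : ∀ᵐ t ∂μ, t ∈ ⋃ i, A i) (hφ : ∀ i, AEMeasurable (φ i) (μ.restrict (A i)))
    (hmap : ∀ i, (μ.restrict (A i)).map (φ i) ≤ c i • μ)
    (hFG : ∀ i, ∀ᵐ t ∂μ.restrict (A i), F t ≤ G (φ i t)) :
    ∫⁻ t, F t ∂μ ≤ (∑' i, c i) * ∫⁻ t, G t ∂μ := by
  have hG' i : AEMeasurable G ((μ.restrict (A i)).map (φ i)) :=
    hG.mono_ac ((Measure.absolutelyContinuous_of_le (hmap i)).trans
      Measure.smul_absolutelyContinuous)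
  calc ∫⁻ t, F t ∂μ = ∫⁻ t in ⋃ i, A i, F t ∂μ := by
        rw [Measure.restrict_eq_self_of_ae_mem hA]
    _ ≤ ∑' i, ∫⁻ t in A i, F t ∂μ := lintegral_iUnion_le _ _
    _ ≤ ∑' i, ∫⁻ t in A i, G (φ i t) ∂μ :=
        ENNReal.tsum_le_tsum fun i => lintegral_mono_ae (hFG i)
    _ = ∑' i, ∫⁻ s, G s ∂(μ.restrict (A i)).map (φ i) := by
        simp_rw [lintegral_map' (hG' _) (hφ _)]
    _ ≤ ∑' i, ∫⁻ s, G s ∂(c i • μ) :=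
        ENNReal.tsum_le_tsum fun i => lintegral_mono' (hmap i) le_rfl
    _ = (∑' i, c i) * ∫⁻ t, G t ∂μ := by
        simp only [lintegral_smul_measure, smul_eq_mul, ENNReal.tsum_mul_right]

theorem essSup_le_of_ae_le_comp {F G : X → ℝ≥0∞}
    (hA : ∀ᵐ t ∂μ, t ∈ ⋃ i, A i) (hφ : ∀ i, AEMeasurable (φ i) (μ.restrict (A i)))
    (hmap : ∀ i, (μ.restrict (A i)).map (φ i) ≪ μ)
    (hFG : ∀ i, ∀ᵐ t ∂μ.restrict (A i), F t ≤ G (φ i t)) :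
    essSup F μ ≤ essSup G μ := by
  refine essSup_le_of_ae_le _ ?_
  have hcover : ∀ᵐ t ∂μ.restrict (⋃ i, A i), F t ≤ essSup G μ :=
    (ae_restrict_iUnion_iff _ _).2 fun i => by
      filter_upwards [hFG i, ae_of_ae_map (hφ i) ((hmap i).ae_le (ENNReal.ae_le_essSup G))]
        with t hFt hGt using hFt.trans hGt
  rwa [Measure.restrict_eq_self_of_ae_mem hA] at hcover

variable {E F : Type*} [NormedAddCommGroup E] [NormedAddCommGroup F] {g : X → E} {h : X → F}
  {Λ : ℝ≥0∞}

theorem eLpNorm_le_mul_of_ae_le_comp (p : ℝ≥0∞) (hg : AEStronglyMeasurable g μ)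
    (hA : ∀ᵐ t ∂μ, t ∈ ⋃ i, A i) (hφ : ∀ i, AEMeasurable (φ i) (μ.restrict (A i)))
    (hmap : ∀ i, (μ.restrict (A i)).map (φ i) ≤ c i • μ) (hc : ∑' i, c i ≤ 1)
    (hh : ∀ i, ∀ᵐ t ∂μ.restrict (A i), ‖h t‖ₑ ≤ Λ * ‖g (φ i t)‖ₑ) :
    eLpNorm h p μ ≤ Λ * eLpNorm g p μ := by
  rcases eq_or_ne p 0 with rfl | hp0
  · simp
  rcases eq_or_ne p ∞ with rfl | hptop
  · simp only [eLpNorm_exponent_top, eLpNormEssSup, ← essSup_const_mul]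
    exact essSup_le_of_ae_le_comp hA hφ
      (fun i => (Measure.absolutelyContinuous_of_le (hmap i)).trans
        Measure.smul_absolutelyContinuous) hh
  have hq : 0 < p.toReal := ENNReal.toReal_pos hp0 hptop
  have hint : ∫⁻ t, ‖h t‖ₑ ^ p.toReal ∂μ ≤ Λ ^ p.toReal * ∫⁻ t, ‖g t‖ₑ ^ p.toReal ∂μ := by
    calc ∫⁻ t, ‖h t‖ₑ ^ p.toReal ∂μ ≤ (∑' i, c i) * ∫⁻ t, (Λ * ‖g t‖ₑ) ^ p.toReal ∂μ :=
          lintegral_le_tsum_mul_of_ae_le_comp ((hg.enorm.const_mul Λ).pow_const _) hA hφ hmap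
            fun i => (hh i).mono fun t ht => ENNReal.rpow_le_rpow ht hq.le
      _ ≤ ∫⁻ t, (Λ * ‖g t‖ₑ) ^ p.toReal ∂μ := mul_le_of_le_one_left' hc
      _ = Λ ^ p.toReal * ∫⁻ t, ‖g t‖ₑ ^ p.toReal ∂μ := by
          simp_rw [ENNReal.mul_rpow_of_nonneg _ _ hq.le]
          exact lintegral_const_mul'' _ (hg.enorm.pow_const _)
  rw [eLpNorm_eq_lintegral_rpow_enorm_toReal hp0 hptop,
    eLpNorm_eq_lintegral_rpow_enorm_toReal hp0 hptop]
  calc (∫⁻ t, ‖h t‖ₑ ^ p.toReal ∂μ) ^ (1 / p.toReal)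
      ≤ (Λ ^ p.toReal * ∫⁻ t, ‖g t‖ₑ ^ p.toReal ∂μ) ^ (1 / p.toReal) :=
        ENNReal.rpow_le_rpow hint (by positivity)
    _ = Λ * (∫⁻ t, ‖g t‖ₑ ^ p.toReal ∂μ) ^ (1 / p.toReal) := by
        rw [ENNReal.mul_rpow_of_nonneg _ _ (by positivity), ← ENNReal.rpow_mul,
          mul_one_div_cancel hq.ne', ENNReal.rpow_one]

end PiecewiseComposition

theorem ENNReal.eq_zero_of_le_mul_of_lt_one {a c : ℝ≥0∞} (hac : a ≤ c * a) (ha : a ≠ ∞)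
    (hc : c < 1) : a = 0 := by
  by_contra ha0
  exact (hac.trans_lt ((ENNReal.mul_lt_mul_iff_left ha0 ha).2 hc)).ne' (one_mul a)

theorem Fin.sum_succ_sub_castSucc {M : Type*} [AddCommGroup M] {N : ℕ} (f : Fin (N + 1) → M) :
    ∑ i : Fin N, (f i.succ - f i.castSucc) = f (Fin.last N) - f 0 := by
  induction N with
  | zero => simp
  | succ N ih =>
    rw [Fin.sum_univ_castSucc]
    simp only [Fin.succ_castSucc]
    rw [ih (fun j => f j.castSucc)]
    simp

theorem Ioc_subset_iUnion_Ioc_castSucc_succ {α : Type*} [LinearOrder α] {N : ℕ}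
    (f : Fin (N + 1) → α) :
    Ioc (f 0) (f (Fin.last N)) ⊆ ⋃ i : Fin N, Ioc (f i.castSucc) (f i.succ) := by
  induction N with
  | zero => simp
  | succ N ih =>
    refine Ioc_subset_Ioc_union_Ioc (b := f (Fin.last N).castSucc) |>.trans (union_subset ?_ ?_)
    · exact (ih (f ∘ Fin.castSucc)).trans
        (iUnion_subset fun i => subset_iUnion_of_subset i.castSucc subset_rfl)
    · exact subset_iUnion_of_subset (Fin.last N) subset_rfl

theorem Real.map_volume_mul_add {c : ℝ} (hc : c ≠ 0) (d : ℝ) :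
    Measure.map (fun t => c * t + d) volume = ENNReal.ofReal |c⁻¹| • volume := by
  have hcomp : (fun t => c * t + d) = (fun y => y + d) ∘ (fun t => c * t) := rfl
  rw [hcomp, ← Measure.map_map (measurable_add_const d) (measurable_const_mul c),
    Real.map_volume_mul_left hc, Measure.map_smul, map_add_right_eq_self]

theorem MeasureTheory.Lp.coeFn_smul_add {X E 𝕜 : Type*} [MeasurableSpace X] {μ : Measure X}
    {p : ℝ≥0∞} [NormedAddCommGroup E] [NormedRing 𝕜] [Module 𝕜 E] [IsBoundedSMul 𝕜 E]
    (c : 𝕜) (u v : Lp E p μ) : ⇑(c • u + v) =ᵐ[μ] c • ⇑u + ⇑v :=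
  (Lp.coeFn_add _ _).trans ((Lp.coeFn_smul c u).add EventuallyEq.rfl)

theorem MeasureTheory.Lp.ae_enorm_le_enorm_top {X E : Type*} [MeasurableSpace X] {μ : Measure X}
    [NormedAddCommGroup E] (u : Lp E ∞ μ) : ∀ᵐ s ∂μ, ‖u s‖ₑ ≤ ‖u‖ₑ := by
  simpa only [Lp.enorm_def, eLpNorm_exponent_top] using ae_le_eLpNormEssSup

section FractalConvolution

variable {N : ℕ} {x : Fin (N + 1) → ℝ} {μ : Measure ℝ} {α : Fin N → ℝ → ℝ}
  {f f' b b' g g' h h' : ℝ → ℝ}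

local notation "μI" => volume.restrict (Icc (x 0) (x (Fin.last N)))

theorem measurableSet_subInt (x : Fin (N + 1) → ℝ) (n : Fin N) : MeasurableSet (subInt x n) := by
  unfold subInt; split_ifs <;> measurability

theorem Ioc_subset_subInt (x : Fin (N + 1) → ℝ) (n : Fin N) :
    Ioc (x n.castSucc) (x n.succ) ⊆ subInt x n := by
  unfold subInt; split_ifs <;> [exact Ioc_subset_Icc_self; exact subset_rfl]

theorem subInt_subset_Icc (x : Fin (N + 1) → ℝ) (n : Fin N) :
    subInt x n ⊆ Icc (x n.castSucc) (x n.succ) := by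
  unfold subInt; split_ifs <;> [exact subset_rfl; exact Ioc_subset_Icc_self]

theorem ae_mem_iUnion_subInt : ∀ᵐ t ∂μI, t ∈ ⋃ n, subInt x n := by
  rw [Measure.restrict_congr_set Ioc_ae_eq_Icc.symm]
  filter_upwards [ae_restrict_mem measurableSet_Ioc] with t ht
  exact iUnion_mono (Ioc_subset_subInt x) (Ioc_subset_iUnion_Ioc_castSucc_succ x ht)

theorem Monotone.tsum_ofReal_succ_sub_castSucc_div_le_one (hx : Monotone x) :
    ∑' n : Fin N, ENNReal.ofReal ((x n.succ - x n.castSucc) / (x (Fin.last N) - x 0)) ≤ 1 := by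
  rw [tsum_fintype, ← ENNReal.ofReal_sum_of_nonneg fun n _ =>
      div_nonneg (sub_nonneg.2 (hx (Fin.castSucc_le_succ n))) (sub_nonneg.2 (hx (Fin.zero_le _))),
    ← Finset.sum_div, Fin.sum_succ_sub_castSucc, ← ENNReal.ofReal_one]
  exact ENNReal.ofReal_le_ofReal (div_self_le_one _)

theorem measurable_Linv (x : Fin (N + 1) → ℝ) (n : Fin N) : Measurable (Linv x n) := by
  unfold Linv; fun_prop

theorem StrictMono.succ_sub_castSucc_pos (hx : StrictMono x) (n : Fin N) :
    0 < x n.succ - x n.castSucc :=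
  sub_pos.2 (hx Fin.castSucc_lt_succ)

theorem StrictMono.last_sub_zero_pos (hx : StrictMono x) (n : Fin N) :
    0 < x (Fin.last N) - x 0 :=
  sub_pos.2 <| hx <| (Fin.zero_le n.castSucc).trans_lt <|
    Fin.castSucc_lt_succ.trans_le (Fin.le_last n.succ)

theorem map_volume_Linv (hx : StrictMono x) (n : Fin N) :
    Measure.map (Linv x n) volume =
      ENNReal.ofReal ((x n.succ - x n.castSucc) / (x (Fin.last N) - x 0)) • volume := by
  have hslope : 0 < (x (Fin.last N) - x 0) / (x n.succ - x n.castSucc) :=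
    div_pos (hx.last_sub_zero_pos n) (hx.succ_sub_castSucc_pos n)
  have hLinv : Linv x n = fun t => (x (Fin.last N) - x 0) / (x n.succ - x n.castSucc) * t +
      (x 0 - x n.castSucc * ((x (Fin.last N) - x 0) / (x n.succ - x n.castSucc))) := by
    funext t; unfold Linv; ring
  rw [hLinv, Real.map_volume_mul_add hslope.ne', abs_of_pos (inv_pos.2 hslope), inv_div]

theorem mapsTo_Linv (hx : StrictMono x) (n : Fin N) :
    MapsTo (Linv x n) (subInt x n) (Icc (x 0) (x (Fin.last N))) := by
  intro t ht
  obtain ⟨hat, htb⟩ := subInt_subset_Icc x n ht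
  have hΔ := hx.succ_sub_castSucc_pos n
  have hW := hx.last_sub_zero_pos n
  have hratio : (t - x n.castSucc) / (x n.succ - x n.castSucc) ∈ Icc (0 : ℝ) 1 :=
    ⟨div_nonneg (by linarith) hΔ.le, (div_le_one hΔ).2 (by linarith)⟩
  rw [show Linv x n t = x 0 + (t - x n.castSucc) / (x n.succ - x n.castSucc) *
      (x (Fin.last N) - x 0) by unfold Linv; ring]
  constructor <;> nlinarith [hratio.1, hratio.2]

theorem map_restrict_subInt_Linv_le (hx : StrictMono x) (n : Fin N) :
    ((μI).restrict (subInt x n)).map (Linv x n) ≤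
      ENNReal.ofReal ((x n.succ - x n.castSucc) / (x (Fin.last N) - x 0)) • μI := by
  calc ((μI).restrict (subInt x n)).map (Linv x n)
      ≤ (volume.restrict (Linv x n ⁻¹' Icc (x 0) (x (Fin.last N)))).map (Linv x n) :=
        Measure.map_mono ((Measure.restrict_mono subset_rfl Measure.restrict_le_self).trans
          (Measure.restrict_mono (mapsTo_Linv hx n) le_rfl)) (measurable_Linv x n)
    _ = _ := by
        rw [← Measure.restrict_map (measurable_Linv x n) measurableSet_Icc, map_volume_Linv hx n,
          Measure.restrict_smul]

theorem RBEq.add (H : RBEq μ x α f b g h) (H' : RBEq μ x α f' b' g' h') :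
    RBEq μ x α (f + f') (b + b') (g + g') (h + h') := fun n => by
  filter_upwards [H n, H' n] with t ht ht' hmem
  simp only [Pi.add_apply, ht hmem, ht' hmem]
  ring

theorem RBEq.sub (H : RBEq μ x α f b g h) (H' : RBEq μ x α f' b' g' h') :
    RBEq μ x α (f - f') (b - b') (g - g') (h - h') := fun n => by
  filter_upwards [H n, H' n] with t ht ht' hmem
  simp only [Pi.sub_apply, ht hmem, ht' hmem]
  ring

theorem RBEq.const_smul (H : RBEq μ x α f b g h) (c : ℝ) :
    RBEq μ x α (c • f) (c • b) (c • g) (c • h) := fun n => by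
  filter_upwards [H n] with t ht hmem
  simp only [Pi.smul_apply, smul_eq_mul, ht hmem]
  ring

theorem ae_restrict_subInt_comp_Linv (hx : StrictMono x) (n : Fin N) {q : ℝ → Prop}
    (hq : ∀ᵐ s ∂μI, q s) :
    ∀ᵐ t ∂(μI).restrict (subInt x n), q (Linv x n t) :=
  ae_of_ae_map (measurable_Linv x n).aemeasurable
    (((Measure.absolutelyContinuous_of_le (map_restrict_subInt_Linv_le hx n)).trans
      Measure.smul_absolutelyContinuous).ae_le hq)

theorem RBEq.eLpNorm_sub_le {Λ : ℝ≥0∞} (hx : StrictMono x) (p : ℝ≥0∞)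
    (hα : ∀ n, ∀ᵐ s ∂μI, ‖α n s‖ₑ ≤ Λ) (hg : AEStronglyMeasurable g μI)
    (hb : AEStronglyMeasurable b μI) (H : RBEq μI x α f b g h) :
    eLpNorm (h - f) p μI ≤ Λ * eLpNorm (g - b) p μI := by
  refine eLpNorm_le_mul_of_ae_le_comp p (hg.sub hb) ae_mem_iUnion_subInt
    (fun n => (measurable_Linv x n).aemeasurable) (map_restrict_subInt_Linv_le hx)
    hx.monotone.tsum_ofReal_succ_sub_castSucc_div_le_one fun n => ?_
  filter_upwards [(ae_restrict_iff' (measurableSet_subInt x n)).2 (H n),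
    ae_restrict_subInt_comp_Linv hx n (hα n)] with t ht hαt
  simp only [Pi.sub_apply]
  rw [ht, add_sub_cancel_left, enorm_mul]
  gcongr

theorem SelfRef.ae_eq_of_ae_eq {Λ : ℝ≥0∞} (hx : StrictMono x) {p : ℝ≥0∞} (hp : p ≠ 0)
    (hα : ∀ n, ∀ᵐ s ∂μI, ‖α n s‖ₑ ≤ Λ) (hΛ : Λ < 1)
    (H : SelfRef μI x α f b h) (H' : SelfRef μI x α f' b' h')
    (hf : f =ᵐ[μI] f') (hb : b =ᵐ[μI] b') (hh : MemLp h p μI) (hh' : MemLp h' p μI) :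
    h =ᵐ[μI] h' := by
  have hcontr := (H.sub H').eLpNorm_sub_le hx p hα (hh.1.sub hh'.1)
    (aestronglyMeasurable_zero.congr hb.sub_eq.symm)
  have hshift {e e' : ℝ → ℝ} (he : e =ᵐ[μI] e') :
      eLpNorm (h - h' - (e - e')) p μI = eLpNorm (h - h') p μI :=
    eLpNorm_congr_ae (by filter_upwards [he] with t ht; simp [ht])
  rw [hshift hf, hshift hb] at hcontr
  have hzero := ENNReal.eq_zero_of_le_mul_of_lt_one hcontr (hh.sub hh').2.ne hΛ
  filter_upwards [(eLpNorm_eq_zero_iff (hh.1.sub hh'.1) hp).1 hzero] with t ht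
  exact sub_eq_zero.1 ht

theorem SelfRef.norm_le (hx : StrictMono x) {p : ℝ≥0∞} [Fact (1 ≤ p)] {Λ : ℝ} (hΛ0 : 0 ≤ Λ)
    (hΛ : Λ < 1) (hα : ∀ n, ∀ᵐ s ∂μI, ‖α n s‖ₑ ≤ ENNReal.ofReal Λ) {f b h : Lp ℝ p μI}
    (H : SelfRef μI x α f b h) :
    ‖h‖ ≤ 1 / (1 - Λ) * (‖f‖ + ‖b‖) := by
  have hcontr : ‖h - f‖ ≤ Λ * ‖h - b‖ := by
    have := H.eLpNorm_sub_le hx p hα (Lp.aestronglyMeasurable h) (Lp.aestronglyMeasurable b)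
    rw [← eLpNorm_congr_ae (Lp.coeFn_sub _ _), ← eLpNorm_congr_ae (Lp.coeFn_sub _ _)] at this
    have := ENNReal.toReal_mono (mul_ne_top ofReal_ne_top (Lp.eLpNorm_ne_top _)) this
    rwa [ENNReal.toReal_mul, ENNReal.toReal_ofReal hΛ0, ← Lp.norm_def, ← Lp.norm_def] at this
  have := norm_sub_norm_le h f
  have := norm_sub_le h b
  rw [div_mul_eq_mul_div, one_mul, le_div_iff₀ (by linarith)]
  nlinarith [norm_nonneg b]

end FractalConvolution

theorem fractal_convolution_linear_and_bounded_general
    (N : ℕ) (x : Fin (N + 1) → ℝ) (hx : StrictMono x)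
    (μ : Measure ℝ) (hμ : μ = volume.restrict (Set.Icc (x 0) (x (Fin.last N))))
    (p : ℝ≥0∞) [Fact (1 ≤ p)]
    (α : Fin N → Lp ℝ ∞ μ)
    (Λ : ℝ) (hΛdef : Λ = ⨆ n : Fin N, ‖α n‖) (hΛ : Λ < 1)
    (P : Lp ℝ p μ → Lp ℝ p μ → Lp ℝ p μ)
    (hP : ∀ f b : Lp ℝ p μ, SelfRef μ x (fun n => ⇑(α n)) ⇑f ⇑b ⇑(P f b)) :
    (∀ (f f' b b' : Lp ℝ p μ) (γ : ℝ),
      P (γ • f + f') (γ • b + b') = γ • P f b + P f' b') ∧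
    (∀ f b : Lp ℝ p μ, ‖P f b‖ ≤ 1 / (1 - Λ) * (‖f‖ + ‖b‖)) := by
  subst hμ
  have hΛ0 : 0 ≤ Λ := hΛdef ▸ Real.iSup_nonneg fun n => norm_nonneg (α n)
  have hα n : ∀ᵐ s ∂volume.restrict (Icc (x 0) (x (Fin.last N))),
      ‖α n s‖ₑ ≤ ENNReal.ofReal Λ := by
    filter_upwards [Lp.ae_enorm_le_enorm_top (α n)] with s hs
    have hnorm : ‖α n‖ ≤ Λ := hΛdef ▸ le_ciSup (Set.finite_range fun n => ‖α n‖).bddAbove n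
    exact hs.trans ((ofReal_norm (α n)).symm.trans_le (ENNReal.ofReal_le_ofReal hnorm))
  refine ⟨fun f f' b b' γ => Lp.ext ?_, fun f b => (hP f b).norm_le hx hΛ0 hΛ hα⟩
  have hcomb : SelfRef (volume.restrict (Icc (x 0) (x (Fin.last N)))) x (fun n => ⇑(α n))
      (γ • ⇑f + ⇑f') (γ • ⇑b + ⇑b') (γ • ⇑(P f b) + ⇑(P f' b')) :=
    ((hP f b).const_smul γ).add (hP f' b')
  have hmem : MemLp (γ • ⇑(P f b) + ⇑(P f' b')) p
      (volume.restrict (Icc (x 0) (x (Fin.last N)))) :=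
    ((Lp.memLp (P f b)).const_smul γ).add (Lp.memLp (P f' b'))
  have hp0 : p ≠ 0 := (zero_lt_one.trans_le (Fact.out : 1 ≤ p)).ne'
  filter_upwards [SelfRef.ae_eq_of_ae_eq hx hp0 hα (ENNReal.ofReal_lt_one.2 hΛ) (hP _ _) hcomb
      (Lp.coeFn_smul_add γ f f') (Lp.coeFn_smul_add γ b b') (Lp.memLp _) hmem,
    Lp.coeFn_smul_add γ (P f b) (P f' b')] with t hsol hsum
  rw [hsol, hsum]

/-- Fractal convolution `P(f,b) = f *_T b` is linear and bounded,
with `‖f *_T b‖_p ≤ (1/(1−Λ))(‖f‖_p + ‖b‖_p)`; hence its operator norm with respect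
to the product norm `‖(f,b)‖ = ‖f‖_p + ‖b‖_p` is at most `1/(1−Λ)`. -/
theorem fractal_convolution_linear_and_bounded
    (N : ℕ) (hN : 2 ≤ N) (x : Fin (N + 1) → ℝ) (hx : StrictMono x)
    (μ : Measure ℝ) (hμ : μ = volume.restrict (Set.Icc (x 0) (x (Fin.last N))))
    (p : ℝ≥0∞) [Fact (1 ≤ p)]
    (α : Fin N → Lp ℝ ∞ μ)
    (Λ : ℝ) (hΛdef : Λ = ⨆ n : Fin N, ‖α n‖) (hΛ : Λ < 1)
    (P : Lp ℝ p μ → Lp ℝ p μ → Lp ℝ p μ)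
    (hP : ∀ f b : Lp ℝ p μ, SelfRef μ x (fun n => ⇑(α n)) ⇑f ⇑b ⇑(P f b)) :
    (∀ (f f' b b' : Lp ℝ p μ) (γ : ℝ),
      P (γ • f + f') (γ • b + b') = γ • P f b + P f' b') ∧
    (∀ f b : Lp ℝ p μ, ‖P f b‖ ≤ 1 / (1 - Λ) * (‖f‖ + ‖b‖)) :=
  fractal_convolution_linear_and_bounded_general N x hx μ hμ p α Λ hΛdef hΛ P hP
end
end

section
/- For all f, f', b, b' ∈ L^p(I) (1 ≤ p ≤ ∞), it holds that ‖(f *_T b) − (f' *_T b')‖_p ≤ (1/(1−Λ))(‖f − f'‖_p + Λ‖b − b'‖_p). -/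
open MeasureTheory ENNReal

noncomputable section

/-!
Subtracting the two self-referential equations, `G = fb - f'b'` satisfies
`G = (f - f') + V (G - (b - b'))` a.e., where `V` is the linear part of the Read–Bajraktarević
operator. On `I n`, `V g = (α n · g) ∘ Lₙ⁻¹`, and `Lₙ⁻¹` pushes Lebesgue measure on `I n` forward to
`|I n| / |I|` times Lebesgue measure on `I`. These weights sum to `1`, so `‖V g‖_p ≤ Λ ‖g‖_p` for
every `p` (including `p = ∞`, where the weights enter with exponent `0`). Hence
`‖G‖ ≤ ‖f - f'‖ + Λ (‖G‖ + ‖b - b'‖)`, and `Λ < 1` lets one solve for `‖G‖`.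
-/

open Set

theorem Fin.sum_succ_sub_castSucc_s9 {M : Type*} [AddCommGroup M] :
    ∀ {N : ℕ} (x : Fin (N + 1) → M), ∑ n : Fin N, (x n.succ - x n.castSucc) = x (Fin.last N) - x 0
  | 0, x => by simp
  | N + 1, x => by
    rw [Fin.sum_univ_castSucc]
    have := Fin.sum_succ_sub_castSucc_s9 (fun i : Fin (N + 1) => x i.castSucc)
    simp only [Fin.succ_castSucc] at this ⊢
    rw [this]
    simp only [Fin.castSucc_zero, Fin.succ_last]
    abel

theorem Fin.Ioc_subset_iUnion_Ioc {X : Type*} [LinearOrder X] {N : ℕ} (x : Fin (N + 1) → X)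
    (k : Fin (N + 1)) : Ioc (x 0) (x k) ⊆ ⋃ n : Fin N, Ioc (x n.castSucc) (x n.succ) := by
  induction k using Fin.induction with
  | zero => simp
  | succ i ih =>
    exact Ioc_subset_Ioc_union_Ioc.trans
      (union_subset ih (subset_iUnion (fun n : Fin N => Ioc (x n.castSucc) (x n.succ)) i))

theorem eLpNorm_le_of_forall_restrict_le {α ε ι : Type*} [MeasurableSpace α] [ENorm ε]
    [Fintype ι] {μ : Measure α} {s : ι → Set α} (hs : ∀ᵐ a ∂μ, ∃ i, a ∈ s i) {w : ι → ℝ≥0∞}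
    (hw : ∑ i, w i ≤ 1) {f : α → ε} {p C : ℝ≥0∞}
    (hf : ∀ i, eLpNorm f p (μ.restrict (s i)) ≤ w i ^ (1 / p).toReal * C) :
    eLpNorm f p μ ≤ C := by
  have hμ : μ.restrict (⋃ i, s i) = μ :=
    Measure.restrict_eq_self_of_ae_mem (by simpa only [mem_iUnion] using hs)
  rcases eq_or_ne p 0 with rfl | hp0
  · simp
  rcases eq_or_ne p ∞ with rfl | hptop
  · simp only [eLpNorm_exponent_top, ENNReal.div_top, ENNReal.toReal_zero, ENNReal.rpow_zero,
      one_mul] at hf ⊢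
    rw [← hμ]
    refine eLpNormEssSup_le_of_ae_enorm_bound ((ae_restrict_iUnion_iff s _).2 fun i => ?_)
    exact (enorm_ae_le_eLpNormEssSup f _).mono fun a ha => ha.trans (hf i)
  set q := p.toReal
  have hq : 0 < q := ENNReal.toReal_pos hp0 hptop
  simp only [eLpNorm_eq_eLpNorm' hp0 hptop, one_div, ENNReal.toReal_inv] at hf ⊢
  rw [← ENNReal.rpow_le_rpow_iff hq, ← lintegral_rpow_enorm_eq_rpow_eLpNorm' hq, ← hμ]
  calc ∫⁻ a in ⋃ i, s i, ‖f a‖ₑ ^ q ∂μ ≤ ∑ i, ∫⁻ a in s i, ‖f a‖ₑ ^ q ∂μ :=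
        (lintegral_iUnion_le _ _).trans_eq (tsum_fintype _)
    _ ≤ ∑ i, w i * C ^ q := Finset.sum_le_sum fun i _ => by
        rw [lintegral_rpow_enorm_eq_rpow_eLpNorm' hq]
        calc _ ≤ (w i ^ q⁻¹ * C) ^ q := ENNReal.rpow_le_rpow (hf i) hq.le
          _ = w i * C ^ q := by
            rw [ENNReal.mul_rpow_of_nonneg _ _ hq.le, ← ENNReal.rpow_mul, inv_mul_cancel₀ hq.ne',
              ENNReal.rpow_one]
    _ = (∑ i, w i) * C ^ q := (Finset.sum_mul ..).symm
    _ ≤ C ^ q := mul_le_of_le_one_left' hw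

theorem map_volume_restrict_Icc_affine {c : ℝ} (hc : 0 < c) (d a b : ℝ) :
    (volume.restrict (Icc a b)).map (fun t => c * t + d) =
      ENNReal.ofReal c⁻¹ • volume.restrict (Icc (c * a + d) (c * b + d)) := by
  have hpre : (fun t => c * t + d) ⁻¹' Icc (c * a + d) (c * b + d) = Icc a b := by
    ext t; simp [mul_le_mul_iff_of_pos_left hc]
  have hmap : volume.map (fun t => c * t + d) = ENNReal.ofReal c⁻¹ • (volume : Measure ℝ) := by
    rw [show (fun t => c * t + d) = (· + d) ∘ (c * ·) from rfl,
      ← Measure.map_map (measurable_add_const d) (measurable_const_mul c),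
      Real.map_volume_mul_left hc.ne', Measure.map_smul, map_add_right_eq_self,
      abs_of_pos (inv_pos.2 hc)]
  rw [← hpre, ← Measure.restrict_map (by fun_prop) measurableSet_Icc, hmap, Measure.restrict_smul]

theorem toReal_le_of_le_add_mul {a c d : ℝ≥0∞} {Λ : ℝ} (hΛ0 : 0 ≤ Λ) (hΛ : Λ < 1) (ha : a ≠ ∞)
    (hc : c ≠ ∞) (hd : d ≠ ∞) (h : a ≤ c + ENNReal.ofReal Λ * (a + d)) :
    a.toReal ≤ 1 / (1 - Λ) * (c.toReal + Λ * d.toReal) := by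
  have := ENNReal.toReal_mono (by finiteness) h
  rw [ENNReal.toReal_add hc (by finiteness), ENNReal.toReal_mul, ENNReal.toReal_ofReal hΛ0,
    ENNReal.toReal_add ha hd] at this
  rw [div_mul_eq_mul_div, one_mul, le_div_iff₀ (by linarith)]
  linarith

namespace FractalConvolution

variable {N : ℕ} {x : Fin (N + 1) → ℝ}

local notation "vol[" x "]" => volume.restrict (Icc (x 0) (x (Fin.last _)))

theorem measurableSet_subInt (x : Fin (N + 1) → ℝ) (n : Fin N) : MeasurableSet (subInt x n) := by
  unfold subInt; split
  exacts [measurableSet_Icc, measurableSet_Ioc]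

theorem Ioc_subset_subInt (x : Fin (N + 1) → ℝ) (n : Fin N) :
    Ioc (x n.castSucc) (x n.succ) ⊆ subInt x n := by
  unfold subInt; split
  exacts [Ioc_subset_Icc_self, subset_rfl]

theorem subInt_subset_Icc (x : Fin (N + 1) → ℝ) (n : Fin N) :
    subInt x n ⊆ Icc (x n.castSucc) (x n.succ) := by
  unfold subInt; split
  exacts [subset_rfl, Ioc_subset_Icc_self]

theorem subInt_subset_Icc_ends (hx : StrictMono x) (n : Fin N) :
    subInt x n ⊆ Icc (x 0) (x (Fin.last N)) :=
  (subInt_subset_Icc x n).trans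
    (Icc_subset_Icc (hx.monotone (Fin.zero_le _)) (hx.monotone (Fin.le_last _)))

theorem volume_restrict_subInt (x : Fin (N + 1) → ℝ) (n : Fin N) :
    volume.restrict (subInt x n) = volume.restrict (Icc (x n.castSucc) (x n.succ)) := by
  unfold subInt; split
  exacts [rfl, Measure.restrict_congr_set Ioc_ae_eq_Icc]

theorem disjoint_subInt_of_lt (hx : StrictMono x) {m n : Fin N} (hmn : m < n) :
    Disjoint (subInt x m) (subInt x n) := by
  have hn : n.val ≠ 0 := by have := Fin.lt_def.1 hmn; omega
  have hle : x m.succ ≤ x n.castSucc := hx.monotone (Fin.succ_le_castSucc_iff.2 hmn)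
  refine disjoint_left.2 fun t htm htn => ?_
  have h₁ := (subInt_subset_Icc x m htm).2
  have h₂ : x n.castSucc < t := by unfold subInt at htn; rw [if_neg hn] at htn; exact htn.1
  linarith

theorem pairwise_disjoint_subInt (hx : StrictMono x) :
    Pairwise fun m n => Disjoint (subInt x m) (subInt x n) := fun _ _ hmn =>
  hmn.lt_or_gt.elim (disjoint_subInt_of_lt hx) fun h => (disjoint_subInt_of_lt hx h).symm

theorem ae_exists_mem_subInt (x : Fin (N + 1) → ℝ) : ∀ᵐ t ∂vol[x], ∃ n, t ∈ subInt x n := by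
  rw [Measure.restrict_congr_set Ioc_ae_eq_Icc.symm]
  filter_upwards [ae_restrict_mem measurableSet_Ioc] with t ht
  obtain ⟨n, hn⟩ := mem_iUnion.1 (Fin.Ioc_subset_iUnion_Ioc x _ ht)
  exact ⟨n, Ioc_subset_subInt x n hn⟩

theorem Linv_eq_affine (x : Fin (N + 1) → ℝ) (n : Fin N) :
    Linv x n = fun t => (x (Fin.last N) - x 0) / (x n.succ - x n.castSucc) * t +
      (x 0 - (x (Fin.last N) - x 0) / (x n.succ - x n.castSucc) * x n.castSucc) := by
  funext t; unfold Linv; ring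

theorem map_Linv_volume_restrict_subInt (hx : StrictMono x) (n : Fin N) :
    (volume.restrict (subInt x n)).map (Linv x n) =
      ENNReal.ofReal ((x n.succ - x n.castSucc) / (x (Fin.last N) - x 0)) • vol[x] := by
  have hgap : 0 < x n.succ - x n.castSucc := sub_pos.2 (hx Fin.castSucc_lt_succ)
  have hlen : 0 < x (Fin.last N) - x 0 := by
    linarith [hx.monotone (Fin.zero_le n.castSucc), hx.monotone (Fin.le_last n.succ)]
  rw [volume_restrict_subInt, Linv_eq_affine, map_volume_restrict_Icc_affine (div_pos hlen hgap),
    inv_div]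
  congr 3 <;> field_simp <;> ring

/-- The linear part `g ↦ (α n ∘ Lₙ⁻¹) · (g ∘ Lₙ⁻¹)` (on `I n`) of `T_{f,b}`, so that
`T_{f,b} g = f + rbLinear x α (g - b)`. -/
def rbLinear (x : Fin (N + 1) → ℝ) (α : Fin N → ℝ → ℝ) (g : ℝ → ℝ) : ℝ → ℝ :=
  fun t => ∑ n, (subInt x n).indicator (fun s => α n (Linv x n s) * g (Linv x n s)) t

theorem rbLinear_sub (x : Fin (N + 1) → ℝ) (α : Fin N → ℝ → ℝ) (g g' : ℝ → ℝ) :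
    rbLinear x α g - rbLinear x α g' = rbLinear x α (g - g') := by
  funext t
  simp only [rbLinear, Pi.sub_apply, ← Finset.sum_sub_distrib, mul_sub, indicator_sub]

theorem rbLinear_of_mem (hx : StrictMono x) (α : Fin N → ℝ → ℝ) (g : ℝ → ℝ) {n : Fin N} {t : ℝ}
    (ht : t ∈ subInt x n) : rbLinear x α g t = α n (Linv x n t) * g (Linv x n t) := by
  rw [rbLinear, Finset.sum_eq_single_of_mem n (Finset.mem_univ n), indicator_of_mem ht]
  exact fun m _ hmn => indicator_of_notMem (disjoint_right.1 (pairwise_disjoint_subInt hx hmn) ht) _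

theorem RBEq.ae_eq_add_rbLinear (hx : StrictMono x) {α : Fin N → ℝ → ℝ} {f b g h : ℝ → ℝ}
    (hT : RBEq vol[x] x α f b g h) : h =ᵐ[vol[x]] f + rbLinear x α (g - b) := by
  filter_upwards [ae_all_iff.2 hT, ae_exists_mem_subInt x] with t ht ⟨n, hn⟩
  rw [ht n hn, Pi.add_apply, rbLinear_of_mem hx α _ hn, Pi.sub_apply]

theorem sum_ofReal_length_div_le_one (hx : StrictMono x) :
    ∑ n : Fin N, ENNReal.ofReal ((x n.succ - x n.castSucc) / (x (Fin.last N) - x 0)) ≤ 1 := by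
  have hlen : 0 ≤ x (Fin.last N) - x 0 := sub_nonneg.2 (hx.monotone (Fin.zero_le _))
  rw [← ENNReal.ofReal_sum_of_nonneg fun n _ =>
      div_nonneg (sub_nonneg.2 (hx.monotone (Fin.castSucc_le_succ n))) hlen,
    ← Finset.sum_div, Fin.sum_succ_sub_castSucc_s9, ← ENNReal.ofReal_one]
  exact ENNReal.ofReal_le_ofReal (div_self_le_one _)

theorem eLpNorm_rbLinear_le (hx : StrictMono x) {α : Fin N → ℝ → ℝ} {C : ℝ≥0∞}
    (hαm : ∀ n, AEStronglyMeasurable (α n) vol[x]) (hα : ∀ n, eLpNorm (α n) ∞ vol[x] ≤ C)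
    {g : ℝ → ℝ} (hg : AEStronglyMeasurable g vol[x]) (p : ℝ≥0∞) :
    eLpNorm (rbLinear x α g) p vol[x] ≤ C * eLpNorm g p vol[x] := by
  set μ := vol[x]
  refine eLpNorm_le_of_forall_restrict_le (ae_exists_mem_subInt x)
    (sum_ofReal_length_div_le_one hx) fun n => ?_
  set w := ENNReal.ofReal ((x n.succ - x n.castSucc) / (x (Fin.last N) - x 0))
  have hLinv : Measurable (Linv x n) := by rw [Linv_eq_affine]; fun_prop
  have hmap := map_Linv_volume_restrict_subInt hx n
  calc eLpNorm (rbLinear x α g) p (μ.restrict (subInt x n))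
      = eLpNorm ((α n * g) ∘ Linv x n) p (volume.restrict (subInt x n)) := by
        rw [Measure.restrict_restrict_of_subset (subInt_subset_Icc_ends hx n)]
        exact eLpNorm_congr_ae <| (ae_restrict_mem (measurableSet_subInt x n)).mono
          fun t ht => rbLinear_of_mem hx α g ht
    _ = eLpNorm (α n * g) p (w • μ) := by
        rw [← hmap, eLpNorm_map_measure (by rw [hmap]; exact ((hαm n).mul hg).smul_measure w)
          hLinv.aemeasurable]
    _ ≤ w ^ (1 / p).toReal * eLpNorm (α n * g) p μ := eLpNorm_smul_measure_le ..
    _ ≤ w ^ (1 / p).toReal * (C * eLpNorm g p μ) := by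
        gcongr
        calc eLpNorm (α n * g) p μ ≤ 1 * eLpNorm (α n) ∞ μ * eLpNorm g p μ :=
              eLpNorm_le_eLpNorm_top_mul_eLpNorm p (α n) hg (· * ·) 1 (by simp)
          _ ≤ C * eLpNorm g p μ := by rw [one_mul]; gcongr; exact hα n

theorem eLpNorm_sub_le_of_selfRef (hx : StrictMono x) {α : Fin N → ℝ → ℝ} {C : ℝ≥0∞}
    (hαm : ∀ n, AEStronglyMeasurable (α n) vol[x]) (hα : ∀ n, eLpNorm (α n) ∞ vol[x] ≤ C)
    {p : ℝ≥0∞} (hp : 1 ≤ p) {f f' b b' h h' : ℝ → ℝ}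
    (hf : AEStronglyMeasurable (f - f') vol[x]) (hb : AEStronglyMeasurable (b - b') vol[x])
    (hh : AEStronglyMeasurable (h - h') vol[x])
    (hT : SelfRef vol[x] x α f b h) (hT' : SelfRef vol[x] x α f' b' h') :
    eLpNorm (h - h') p vol[x] ≤
      eLpNorm (f - f') p vol[x] + C * (eLpNorm (h - h') p vol[x] + eLpNorm (b - b') p vol[x]) := by
  set μ := vol[x]
  set V := rbLinear x α ((h - h') - (b - b'))
  have hdiff : h - h' =ᵐ[μ] (f - f') + V := by
    filter_upwards [RBEq.ae_eq_add_rbLinear hx hT, RBEq.ae_eq_add_rbLinear hx hT'] with t ht ht'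
    have hlin : rbLinear x α (h - b) - rbLinear x α (h' - b') = V := by
      rw [rbLinear_sub]; congr 1; abel
    rw [Pi.sub_apply, ht, ht', ← hlin]
    simp only [Pi.add_apply, Pi.sub_apply]
    ring
  have hV : AEStronglyMeasurable V μ :=
    (hh.sub hf).congr (hdiff.mono fun t ht => by simp only [Pi.sub_apply, ht, Pi.add_apply]; ring)
  calc eLpNorm (h - h') p μ = eLpNorm ((f - f') + V) p μ := eLpNorm_congr_ae hdiff
    _ ≤ eLpNorm (f - f') p μ + eLpNorm V p μ := eLpNorm_add_le hf hV hp
    _ ≤ eLpNorm (f - f') p μ + C * eLpNorm ((h - h') - (b - b')) p μ := by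
        gcongr; exact eLpNorm_rbLinear_le hx hαm hα (hh.sub hb) p
    _ ≤ eLpNorm (f - f') p μ + C * (eLpNorm (h - h') p μ + eLpNorm (b - b') p μ) := by
        gcongr; exact eLpNorm_sub_le hh hb hp

end FractalConvolution

open FractalConvolution in
theorem fractal_convolution_joint_stability_general
    (N : ℕ) (x : Fin (N + 1) → ℝ) (hx : StrictMono x)
    (μ : Measure ℝ) (hμ : μ = volume.restrict (Set.Icc (x 0) (x (Fin.last N))))
    (p : ℝ≥0∞) [Fact (1 ≤ p)]
    (α : Fin N → Lp ℝ ∞ μ)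
    (Λ : ℝ) (hΛdef : Λ = ⨆ n : Fin N, ‖α n‖) (hΛ : Λ < 1)
    (f f' b b' : Lp ℝ p μ) (fb f'b' : Lp ℝ p μ)
    (hfb : SelfRef μ x (fun n => ⇑(α n)) ⇑f ⇑b ⇑fb)
    (hf'b' : SelfRef μ x (fun n => ⇑(α n)) ⇑f' ⇑b' ⇑f'b') :
    ‖fb - f'b'‖ ≤ 1 / (1 - Λ) * (‖f - f'‖ + Λ * ‖b - b'‖) := by
  subst hμ
  have hΛ0 : 0 ≤ Λ := hΛdef ▸ Real.iSup_nonneg fun n => norm_nonneg (α n)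
  have hα : ∀ n, eLpNorm (α n) ∞ (volume.restrict (Icc (x 0) (x (Fin.last N)))) ≤
      ENNReal.ofReal Λ := fun n => by
    rw [← Lp.enorm_def, ← ofReal_norm, hΛdef]
    exact ENNReal.ofReal_le_ofReal <|
      le_ciSup (f := fun n => ‖α n‖) (Set.finite_range _).bddAbove n
  have key := eLpNorm_sub_le_of_selfRef (p := p) hx (fun n => Lp.aestronglyMeasurable (α n)) hα
    Fact.out ((Lp.aestronglyMeasurable f).sub (Lp.aestronglyMeasurable f'))
    ((Lp.aestronglyMeasurable b).sub (Lp.aestronglyMeasurable b'))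
    ((Lp.aestronglyMeasurable fb).sub (Lp.aestronglyMeasurable f'b')) hfb hf'b'
  simp only [← Lp.edist_def] at key
  simp only [← dist_eq_norm, dist_edist]
  exact toReal_le_of_le_add_mul hΛ0 hΛ (edist_ne_top _ _) (edist_ne_top _ _) (edist_ne_top _ _) key

/-- For all `f, f', b, b' ∈ L^p(I)`,
`‖(f *_T b) − (f' *_T b')‖_p ≤ (1/(1−Λ))(‖f − f'‖_p + Λ‖b − b'‖_p)`. -/
theorem fractal_convolution_joint_stability
    (N : ℕ) (hN : 2 ≤ N) (x : Fin (N + 1) → ℝ) (hx : StrictMono x)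
    (μ : Measure ℝ) (hμ : μ = volume.restrict (Set.Icc (x 0) (x (Fin.last N))))
    (p : ℝ≥0∞) [Fact (1 ≤ p)]
    (α : Fin N → Lp ℝ ∞ μ)
    (Λ : ℝ) (hΛdef : Λ = ⨆ n : Fin N, ‖α n‖) (hΛ : Λ < 1)
    (f f' b b' : Lp ℝ p μ) (fb f'b' : Lp ℝ p μ)
    (hfb : SelfRef μ x (fun n => ⇑(α n)) ⇑f ⇑b ⇑fb)
    (hf'b' : SelfRef μ x (fun n => ⇑(α n)) ⇑f' ⇑b' ⇑f'b') :
    ‖fb - f'b'‖ ≤ 1 / (1 - Λ) * (‖f - f'‖ + Λ * ‖b - b'‖) :=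
  fractal_convolution_joint_stability_general N x hx μ hμ p α Λ hΛdef hΛ f f' b b' fb f'b' hfb hf'b'

end
end
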